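/- The t-entropy H_c is a concave function on the simplex: for probability vectors p, q of the same length, any λ ∈ [0,1], and any c > 0, H_c(λp + (1-λ)q) ≥ λ H_c(p) + (1-λ) H_c(q). -/

import Mathlib

open Real

/-- The t-entropy of a probability vector, zero-probability terms contributing 0. -/
noncomputable def tEntropy {n : ℕ} (c : ℝ) (p : Fin n → ℝ) : ℝ :=
  (∑ i, p i * Real.arctan ((p i) ^ (-c))) - Real.pi / 4

/-!
Since `arctan (x⁻ᶜ) = π/2 - arctan (xᶜ)`, each summand `x arctan (x⁻ᶜ)` is a linear function minus
`h x = x arctan (xᶜ)`, so it suffices that `h` is convex on `[0, 1]`. Its derivative is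
`arctan s + c s / (1 + s²)` with `s = xᶜ ∈ [0, 1]`, a sum of two increasing functions of `s`, and `s`
increases with `x`. Concavity of the sum over coordinates in `[0, 1]` follows termwise.
-/

open Set

theorem ConcaveOn.sum_comp_apply {ι : Type*} [Fintype ι] {s : Set ℝ} {f : ℝ → ℝ}
    (hf : ConcaveOn ℝ s f) :
    ConcaveOn ℝ (univ.pi fun _ : ι => s) fun p => ∑ i, f (p i) := by
  refine ⟨convex_pi fun _ _ => hf.1, fun p hp q hq a b ha hb hab => ?_⟩
  simp only [Pi.add_apply, Pi.smul_apply, smul_eq_mul, Finset.mul_sum, ← Finset.sum_add_distrib]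
  exact Finset.sum_le_sum fun i _ => hf.2 (hp i trivial) (hq i trivial) ha hb hab

theorem monotoneOn_div_one_add_sq : MonotoneOn (fun s : ℝ => s / (1 + s ^ 2)) (Icc (-1) 1) := by
  intro a ha b hb hab
  rw [div_le_div_iff₀ (by positivity) (by positivity)]
  have hab1 : a * b ≤ 1 := by nlinarith [ha.1, ha.2, hb.1, hb.2]
  -- `b (1 + a²) - a (1 + b²) = (b - a)(1 - a b)`
  nlinarith [mul_nonneg (sub_nonneg.2 hab) (sub_nonneg.2 hab1)]

theorem hasDerivAt_mul_arctan_rpow (c : ℝ) {x : ℝ} (hx : 0 < x) :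
    HasDerivAt (fun y : ℝ => y * arctan (y ^ c))
      (arctan (x ^ c) + c * (x ^ c / (1 + (x ^ c) ^ 2))) x := by
  have h := (hasDerivAt_id x).mul (hasDerivAt_rpow_const (p := c) (Or.inl hx.ne')).arctan
  have hpow : x * x ^ (c - 1) = x ^ c := by
    rw [mul_comm, ← rpow_add_one hx.ne', sub_add_cancel]
  refine h.congr_deriv ?_
  rw [← hpow, id]
  field_simp

theorem convexOn_mul_arctan_rpow {c : ℝ} (hc : 0 < c) :
    ConvexOn ℝ (Icc 0 1) fun x : ℝ => x * arctan (x ^ c) := by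
  refine MonotoneOn.convexOn_of_deriv (convex_Icc 0 1)
    (continuous_id.mul (continuous_arctan.comp (continuous_rpow_const hc.le))).continuousOn
    ?_ ?_ <;> rw [interior_Icc]
  · exact fun x hx => (hasDerivAt_mul_arctan_rpow c hx.1).differentiableAt.differentiableWithinAt
  · intro x hx y hy hxy
    rw [(hasDerivAt_mul_arctan_rpow c hx.1).deriv, (hasDerivAt_mul_arctan_rpow c hy.1).deriv]
    have hmem : ∀ z ∈ Ioo (0 : ℝ) 1, z ^ c ∈ Icc (-1) 1 := fun z hz =>
      ⟨by linarith [rpow_nonneg hz.1.le c], rpow_le_one hz.1.le hz.2.le hc.le⟩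
    have hs : x ^ c ≤ y ^ c := rpow_le_rpow hx.1.le hxy hc.le
    exact add_le_add (arctan_strictMono.monotone hs)
      (mul_le_mul_of_nonneg_left (monotoneOn_div_one_add_sq (hmem x hx) (hmem y hy) hs) hc.le)

theorem mul_arctan_rpow_neg {x : ℝ} (hx : 0 ≤ x) (c : ℝ) :
    x * arctan (x ^ (-c)) = π / 2 * x - x * arctan (x ^ c) := by
  rcases hx.eq_or_lt with rfl | hx
  · simp
  · rw [rpow_neg hx.le, arctan_inv_of_pos (rpow_pos_of_pos hx c)]
    ring

theorem concaveOn_mul_arctan_rpow_neg {c : ℝ} (hc : 0 < c) :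
    ConcaveOn ℝ (Icc 0 1) fun x : ℝ => x * arctan (x ^ (-c)) :=
  ((concaveOn_id (convex_Icc 0 1)).smul (by positivity : 0 ≤ π / 2)).sub
    (convexOn_mul_arctan_rpow hc) |>.congr fun x hx => (mul_arctan_rpow_neg hx.1 c).symm

theorem tEntropy_concave_on_simplex {n : ℕ} (c : ℝ) (hc : 0 < c)
    (p q : Fin n → ℝ) (hp : ∀ i, 0 ≤ p i) (hpsum : ∑ i, p i = 1)
    (hq : ∀ i, 0 ≤ q i) (hqsum : ∑ i, q i = 1)
    (l : ℝ) (hl0 : 0 ≤ l) (hl1 : l ≤ 1) :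
    l * tEntropy c p + (1 - l) * tEntropy c q ≤
      tEntropy c (fun i => l * p i + (1 - l) * q i) := by
  have mem_cube : ∀ r : Fin n → ℝ, (∀ i, 0 ≤ r i) → ∑ i, r i = 1 →
      r ∈ univ.pi fun _ => Icc (0 : ℝ) 1 := fun r hr hsum i _ =>
    ⟨hr i, hsum ▸ Finset.single_le_sum (fun j _ => hr j) (Finset.mem_univ i)⟩
  have h := (concaveOn_mul_arctan_rpow_neg hc).sum_comp_apply.2 (mem_cube p hp hpsum)
    (mem_cube q hq hqsum) hl0 (sub_nonneg.2 hl1) (add_sub_cancel l 1)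
  simp only [Pi.add_apply, Pi.smul_apply, smul_eq_mul] at h
  simp only [tEntropy]
  linarith
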